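/- arXiv:2106.12500 — 5 statements merged into one kernel-verified Lean document; each statement's English description precedes it below -/
import Mathlib

section
/- For compact open subgroups X and Y of G and elements g, h ∈ G, one has 1_{gY} ⋆ 1_{hX} = μ(Y ∩ hXh⁻¹)·1_{gYhX}. -/
/-!
For sets `A, B` one has `(1_A ⋆ 1_B)(x) = μ(A ∩ x B⁻¹)`. With `A = gY` and `B = hX` this
intersection is empty unless `x = g y h x'` with `y ∈ Y`, `x' ∈ X`, and then it is the left
translate `(g y)(Y ∩ hXh⁻¹)`, whose measure is `μ(Y ∩ hXh⁻¹)` by left invariance of `μ`.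
-/

open MeasureTheory
open scoped Pointwise

/-- The convolution `(f ⋆ f')(x) = ∫_G f(g)·f'(g⁻¹x) dμ(g)` of two real-valued functions
on `G` with respect to the measure `μ`. -/
noncomputable def mconv {G : Type} [Group G] [MeasurableSpace G]
    (μ : Measure G) (f f' : G → ℝ) : G → ℝ :=
  fun x => ∫ g, f g * f' (g⁻¹ * x) ∂μ

theorem mconv_indicator_one_apply {G : Type} [Group G] [MeasurableSpace G] [MeasurableMul G]
    [MeasurableInv G] (μ : Measure G) {A B : Set G} (hA : MeasurableSet A)
    (hB : MeasurableSet B) (x : G) :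
    mconv μ (A.indicator fun _ => 1) (B.indicator fun _ => 1) x = μ.real (A ∩ x • B⁻¹) := by
  classical
  have hmem : ∀ t, t⁻¹ * x ∈ B ↔ t ∈ x • B⁻¹ := fun t => by
    rw [Set.mem_smul_set_iff_inv_smul_mem, Set.mem_inv, smul_eq_mul, mul_inv_rev, inv_inv]
  have hprod : (fun t => A.indicator (fun _ => (1 : ℝ)) t * B.indicator (fun _ => 1) (t⁻¹ * x)) =
      (A ∩ x • B⁻¹).indicator 1 := by
    funext t
    simp only [Set.indicator_apply, hmem, Set.mem_inter_iff, Pi.one_apply, ite_mul, one_mul,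
      zero_mul, ite_and]
  rw [mconv, hprod, integral_indicator_one (hA.inter (hB.inv.const_smul x))]

section Cosets

variable {G : Type} [Group G]

theorem mem_singleton_mul_mul_singleton_mul {Y X : Set G} {g h x : G} :
    x ∈ {g} * Y * {h} * X ↔ ∃ y ∈ Y, ∃ x' ∈ X, g * y * h * x' = x := by
  simp only [Set.mem_mul, Set.mem_singleton_iff, exists_eq_left, exists_exists_and_eq_and]

theorem mem_smul_inv_singleton_mul {X : Set G} {h a z : G} :
    z ∈ a • ({h} * X)⁻¹ ↔ ∃ x ∈ X, h * x = z⁻¹ * a := by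
  rw [Set.mem_smul_set_iff_inv_smul_mem, Set.mem_inv, smul_eq_mul, mul_inv_rev, inv_inv]
  simp only [Set.singleton_mul, Set.mem_image]

theorem singleton_mul_inter_smul_inv_eq_empty {Y X : Set G} {g h x : G}
    (hx : x ∉ {g} * Y * {h} * X) : {g} * Y ∩ x • ({h} * X)⁻¹ = ∅ := by
  refine Set.eq_empty_of_forall_notMem fun z hz => hx ?_
  rw [Set.mem_inter_iff, Set.singleton_mul] at hz
  obtain ⟨⟨y, hy, rfl⟩, hzX⟩ := hz
  obtain ⟨x', hx', hxz⟩ := mem_smul_inv_singleton_mul.1 hzX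
  exact mem_singleton_mul_mul_singleton_mul.2 ⟨y, hy, x', hx', by rw [mul_assoc _ h, hxz]; group⟩

theorem singleton_mul_inter_smul_inv_eq_smul {Y X : Subgroup G} {g h y x : G}
    (hy : y ∈ Y) (hx : x ∈ X) :
    {g} * (Y : Set G) ∩ (g * y * h * x) • ({h} * (X : Set G))⁻¹ =
      (g * y) • ((Y : Set G) ∩ (fun z => h * z * h⁻¹) '' X) := by
  ext z
  rw [Set.mem_inter_iff, mem_smul_inv_singleton_mul, Set.singleton_mul,
    Set.mem_smul_set_iff_inv_smul_mem, smul_eq_mul]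
  simp only [Set.mem_image, Set.mem_inter_iff, SetLike.mem_coe]
  constructor
  · rintro ⟨⟨y', hy', rfl⟩, x', hx', hE⟩
    have hx'_eq : x' = h⁻¹ * ((g * y')⁻¹ * (g * y * h * x)) := by rw [← hE]; group
    refine ⟨by simpa using mul_mem (inv_mem hy) hy', x * x'⁻¹, mul_mem hx (inv_mem hx'), ?_⟩
    rw [hx'_eq]; group
  · rintro ⟨hzY, x', hx', hE⟩
    rw [← hE] at hzY
    obtain rfl : z = g * y * (h * x' * h⁻¹) := by rw [hE]; group
    exact ⟨⟨y * (h * x' * h⁻¹), mul_mem hy hzY, by group⟩, x'⁻¹ * x,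
      mul_mem (inv_mem hx') hx, by group⟩

end Cosets

theorem indicator_conv_indicator_general {G : Type} [Group G] [TopologicalSpace G]
    [IsTopologicalGroup G]
    [MeasurableSpace G] [BorelSpace G]
    (μ : Measure G) [μ.IsHaarMeasure]
    (X Y : Subgroup G) (hXo : IsOpen (X : Set G))
    (hYo : IsOpen (Y : Set G)) (g h : G) :
    mconv μ (({g} * (Y : Set G)).indicator fun _ => (1 : ℝ))
        (({h} * (X : Set G)).indicator fun _ => (1 : ℝ)) =
      fun x => (μ ((Y : Set G) ∩ ((fun y => h * y * h⁻¹) '' (X : Set G)))).toReal *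
        ({g} * (Y : Set G) * {h} * (X : Set G)).indicator (fun _ => (1 : ℝ)) x := by
  funext x
  rw [mconv_indicator_one_apply μ hYo.mul_left.measurableSet hXo.mul_left.measurableSet]
  by_cases hx : x ∈ {g} * (Y : Set G) * {h} * X
  · obtain ⟨y, hy, x', hx', rfl⟩ := mem_singleton_mul_mul_singleton_mul.1 hx
    rw [singleton_mul_inter_smul_inv_eq_smul hy hx', measureReal_def, measure_smul,
      Set.indicator_of_mem hx, mul_one]
  · rw [singleton_mul_inter_smul_inv_eq_empty hx, measureReal_empty, Set.indicator_of_notMem hx,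
      mul_zero]

/-- For compact open subgroups `X, Y ⊆ G` and `g, h ∈ G`:
`1_{gY} ⋆ 1_{hX} = μ(Y ∩ hXh⁻¹) · 1_{gYhX}`. -/
theorem indicator_conv_indicator {G : Type} [Group G] [TopologicalSpace G]
    [IsTopologicalGroup G] [LocallyCompactSpace G] [T2Space G]
    [MeasurableSpace G] [BorelSpace G]
    (μ : Measure G) [μ.IsHaarMeasure]
    (H : Subgroup G) (hHo : IsOpen (H : Set G)) (hHc : IsCompact (H : Set G))
    (hμH : μ (H : Set G) = 1)
    (X Y : Subgroup G) (hXo : IsOpen (X : Set G)) (hXc : IsCompact (X : Set G))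
    (hYo : IsOpen (Y : Set G)) (hYc : IsCompact (Y : Set G)) (g h : G) :
    mconv μ (({g} * (Y : Set G)).indicator fun _ => (1 : ℝ))
        (({h} * (X : Set G)).indicator fun _ => (1 : ℝ)) =
      fun x => (μ ((Y : Set G) ∩ ((fun y => h * y * h⁻¹) '' (X : Set G)))).toReal *
        ({g} * (Y : Set G) * {h} * (X : Set G)).indicator (fun _ => (1 : ℝ)) x :=
  indicator_conv_indicator_general μ X Y hXo hYo g h
end

section
/- For g, g' ∈ G, only finitely many double cosets of H are contained in the set HgHg'H, and if C ⊆ HgHg'H contains exactly one representative of each such double coset, then 1_{HgH} ⋆ 1_{Hg'H} = Σ_{g''∈C} μ(HgH ∩ g''Hg'⁻¹H)·1_{Hg''H}; moreover μ(HgH ∩ g''Hg'⁻¹H) ≥ 1 for every g'' ∈ HgHg'H. -/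
open MeasureTheory DoubleCoset
open scoped Pointwise

section Pointwise
variable {G : Type*} [Group G]

lemma Set.mem_smul_inv_iff {B : Set G} {x t : G} : t ∈ x • B⁻¹ ↔ t⁻¹ * x ∈ B := by
  rw [Set.mem_smul_set_iff_inv_smul_mem, Set.mem_inv, smul_eq_mul, mul_inv_rev, inv_inv]

lemma Set.inter_smul_inv_eq_empty_of_notMem_mul {A B : Set G} {x : G} (hx : x ∉ A * B) :
    A ∩ x • B⁻¹ = ∅ := by
  refine Set.eq_empty_of_forall_notMem fun t ⟨htA, htB⟩ => hx ?_
  exact ⟨t, htA, t⁻¹ * x, Set.mem_smul_inv_iff.1 htB, mul_inv_cancel_left t x⟩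

end Pointwise

namespace DoubleCoset
variable {G : Type*} [Group G] {H K : Subgroup G}

lemma doubleCoset_inv (a : G) (H K : Subgroup G) :
    (doubleCoset a H K)⁻¹ = doubleCoset a⁻¹ K H := by
  simp only [doubleCoset, mul_inv_rev, Set.inv_singleton, inv_coe_set, mul_assoc]

lemma smul_doubleCoset {a : G} (ha : a ∈ H) (x : G) :
    a • doubleCoset x H K = doubleCoset x H K := by
  rw [doubleCoset, ← smul_mul_assoc, ← smul_mul_assoc, smul_coe_set ha]

lemma doubleCoset_mul_subgroup (x : G) : doubleCoset x H K * K = doubleCoset x H K := by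
  rw [doubleCoset, mul_assoc, coe_mul_coe]

lemma subgroup_mul_doubleCoset (x : G) : (H : Set G) * doubleCoset x H K = doubleCoset x H K := by
  rw [doubleCoset, ← mul_assoc, ← mul_assoc, coe_mul_coe]

lemma mem_doubleCoset_comm {x y : G} : y ∈ doubleCoset x H K ↔ x ∈ doubleCoset y H K :=
  ⟨fun h => doubleCoset_eq_of_mem h ▸ mem_doubleCoset_self H K x,
    fun h => doubleCoset_eq_of_mem h ▸ mem_doubleCoset_self H K y⟩

lemma doubleCoset_subset_of_mem {S : Set G} (hH : (H : Set G) * S ⊆ S) (hK : S * K ⊆ S)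
    {x : G} (hx : x ∈ S) : doubleCoset x H K ⊆ S :=
  calc doubleCoset x H K ⊆ H * S * K := by
        unfold doubleCoset; gcongr; exact Set.singleton_subset_iff.2 hx
    _ ⊆ S := (Set.mul_subset_mul_right hH).trans hK

lemma isOpen_doubleCoset [TopologicalSpace G] [ContinuousConstSMul G G] (hK : IsOpen (K : Set G))
    (x : G) : IsOpen (doubleCoset x H K) :=
  hK.mul_left

lemma isCompact_doubleCoset [TopologicalSpace G] [ContinuousMul G]
    (hH : IsCompact (H : Set G)) (hK : IsCompact (K : Set G)) (x : G) :
    IsCompact (doubleCoset x H K) :=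
  (hH.mul isCompact_singleton).mul hK

lemma finite_image_doubleCoset_of_isCompact [TopologicalSpace G] [ContinuousConstSMul G G]
    (hK : IsOpen (K : Set G)) {S : Set G} (hS : IsCompact S) :
    ((doubleCoset · H K) '' S).Finite := by
  obtain ⟨t, -, ht, hcover⟩ := hS.elim_finite_subcover_image (c := (doubleCoset · H K))
    (fun x _ => isOpen_doubleCoset hK x) fun y hy => Set.mem_biUnion hy (mem_doubleCoset_self H K y)
  refine (ht.image (doubleCoset · H K)).subset ?_
  rintro _ ⟨y, hy, rfl⟩
  obtain ⟨x, hxt, hyx⟩ := Set.mem_iUnion₂.1 (hcover hy)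
  exact ⟨x, hxt, (doubleCoset_eq_of_mem hyx).symm⟩

lemma eq_sum_indicator_doubleCoset {R : Type*} [Semiring R] {F : G → R}
    (hF : ∀ x, ∀ y ∈ doubleCoset x H K, F y = F x) {S : Set G} (hFS : ∀ x ∉ S, F x = 0)
    (hS : ∀ x ∈ S, doubleCoset x H K ⊆ S) {C : Finset G} (hCS : (C : Set G) ⊆ S)
    (hC : ∀ x ∈ S, ∃! c, c ∈ C ∧ c ∈ doubleCoset x H K) :
    F = fun x => ∑ c ∈ C, F c * (doubleCoset c H K).indicator (fun _ => 1) x := by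
  ext x
  by_cases hx : x ∈ S
  · obtain ⟨c, ⟨hcC, hcx⟩, hc_unique⟩ := hC x hx
    have hxc : x ∈ doubleCoset c H K := mem_doubleCoset_comm.1 hcx
    rw [Finset.sum_eq_single_of_mem c hcC, Set.indicator_of_mem hxc, mul_one, hF c x hxc]
    intro c' hc'C hc'c
    have hxc' : x ∉ doubleCoset c' H K := fun hxc' =>
      hc'c (hc_unique c' ⟨hc'C, mem_doubleCoset_comm.1 hxc'⟩)
    rw [Set.indicator_of_notMem hxc', mul_zero]
  · rw [hFS x hx, eq_comm]
    refine Finset.sum_eq_zero fun c hc => ?_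
    rw [Set.indicator_of_notMem fun hxc => hx (hS c (hCS hc) hxc), mul_zero]

end DoubleCoset

section Measure
variable {G : Type} [Group G] [MeasurableSpace G] (μ : Measure G)

lemma measure_inter_smul_eq_of_mem_doubleCoset [μ.IsMulLeftInvariant] {H K : Subgroup G}
    {A D : Set G} (hA : H ≤ MulAction.stabilizer G A) (hD : K ≤ MulAction.stabilizer G D)
    {x y : G} (hy : y ∈ doubleCoset x H K) : μ (A ∩ y • D) = μ (A ∩ x • D) := by
  obtain ⟨a, ha, b, hb, rfl⟩ := mem_doubleCoset.1 hy
  have hAa : a • A = A := hA ha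
  have hDb : b • D = D := hD hb
  rw [mul_smul, mul_smul, hDb, ← hAa, ← Set.smul_set_inter, measure_smul, hAa]

lemma measure_le_measure_inter_smul_inv [μ.IsMulLeftInvariant] {H : Subgroup G} {A B : Set G}
    (hA : A * H ⊆ A) (hB : (H : Set G) * B ⊆ B) {x : G} (hx : x ∈ A * B) :
    μ H ≤ μ (A ∩ x • B⁻¹) := by
  obtain ⟨a, ha, b, hb, rfl⟩ := hx
  calc μ H = μ (a • (H : Set G)) := by rw [measure_smul]
    _ ≤ μ (A ∩ (a * b) • B⁻¹) := by
      refine measure_mono ?_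
      rintro _ ⟨h, hh, rfl⟩
      refine ⟨hA (Set.mul_mem_mul ha hh), Set.mem_smul_inv_iff.2 ?_⟩
      simpa [mul_assoc] using hB (Set.mul_mem_mul (inv_mem hh) hb)

lemma mconv_indicator_one [MeasurableMul G] [MeasurableInv G] {A B : Set G}
    (hA : MeasurableSet A) (hB : MeasurableSet B) :
    mconv μ (A.indicator fun _ => (1 : ℝ)) (B.indicator fun _ => 1) =
      fun x => (μ (A ∩ x • B⁻¹)).toReal := by
  ext x
  have hAB : MeasurableSet (A ∩ x • B⁻¹) := hA.inter (hB.inv.const_smul x)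
  have hprod :
      (fun t => A.indicator (fun _ => (1 : ℝ)) t * B.indicator (fun _ => 1) (t⁻¹ * x)) =
        (A ∩ x • B⁻¹).indicator 1 := by
    ext t
    rw [Set.inter_indicator_one, Pi.mul_apply]
    congr 1
    classical
    simp only [Set.indicator_apply, Set.mem_smul_inv_iff, Pi.one_apply]
  rw [mconv, hprod, integral_indicator_one hAB, measureReal_def]

end Measure

theorem doubleCoset_conv_doubleCoset_general {G : Type} [Group G] [TopologicalSpace G]
    [IsTopologicalGroup G]
    [MeasurableSpace G] [BorelSpace G]
    (μ : Measure G) [μ.IsHaarMeasure]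
    (H : Subgroup G) (hHo : IsOpen (H : Set G)) (hHc : IsCompact (H : Set G))
    (hμH : μ (H : Set G) = 1) (g g' : G) :
    -- only finitely many double cosets of `H` are contained in `HgHg'H`
    ((fun x => (H : Set G) * {x} * (H : Set G)) ''
        ((H : Set G) * {g} * (H : Set G) * {g'} * (H : Set G))).Finite ∧
    -- the convolution formula, for any set `C` of representatives of these double cosets
    (∀ C : Finset G,
        (C : Set G) ⊆ (H : Set G) * {g} * (H : Set G) * {g'} * (H : Set G) →
        (∀ x ∈ (H : Set G) * {g} * (H : Set G) * {g'} * (H : Set G),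
          ∃! c, c ∈ C ∧ c ∈ (H : Set G) * {x} * (H : Set G)) →
        mconv μ (((H : Set G) * {g} * (H : Set G)).indicator fun _ => (1 : ℝ))
            (((H : Set G) * {g'} * (H : Set G)).indicator fun _ => (1 : ℝ)) =
          fun x => ∑ c ∈ C,
            (μ (((H : Set G) * {g} * (H : Set G)) ∩
                ({c} * (H : Set G) * {g'⁻¹} * (H : Set G)))).toReal *
              ((H : Set G) * {c} * (H : Set G)).indicator (fun _ => (1 : ℝ)) x) ∧
    -- positivity of the coefficients
    (∀ g'' ∈ (H : Set G) * {g} * (H : Set G) * {g'} * (H : Set G),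
        1 ≤ μ (((H : Set G) * {g} * (H : Set G)) ∩
          ({g''} * (H : Set G) * {g'⁻¹} * (H : Set G)))) := by
  have hdc (x : G) : (H : Set G) * {x} * H = doubleCoset x H H := rfl
  have hS : doubleCoset g H H * {g'} * H = doubleCoset g H H * doubleCoset g' H H := by
    rw [← hdc g', ← mul_assoc, ← mul_assoc, doubleCoset_mul_subgroup]
  have hT (c : G) : {c} * (H : Set G) * {g'⁻¹} * H = c • (doubleCoset g' H H)⁻¹ := by
    rw [doubleCoset_inv, ← Set.singleton_smul]
    show _ = {c} * ((H : Set G) * {g'⁻¹} * H)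
    simp only [mul_assoc]
  simp only [hdc, hS, hT]
  refine ⟨finite_image_doubleCoset_of_isCompact hHo ?_, fun C hCS hC => ?_, fun x hx => ?_⟩
  · exact (isCompact_doubleCoset hHc hHc g).mul (isCompact_doubleCoset hHc hHc g')
  · rw [mconv_indicator_one μ (isOpen_doubleCoset hHo g).measurableSet
      (isOpen_doubleCoset hHo g').measurableSet]
    refine eq_sum_indicator_doubleCoset (fun x y hy => ?_) (fun x hx => ?_)
      (fun x hx => doubleCoset_subset_of_mem ?_ ?_ hx) hCS hC
    · rw [measure_inter_smul_eq_of_mem_doubleCoset μ (fun a ha => smul_doubleCoset ha g)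
        (fun b hb => by rw [MulAction.mem_stabilizer_iff, doubleCoset_inv, smul_doubleCoset hb])
        hy]
    · rw [Set.inter_smul_inv_eq_empty_of_notMem_mul hx, measure_empty, ENNReal.toReal_zero]
    · rw [← mul_assoc, subgroup_mul_doubleCoset]
    · rw [mul_assoc, doubleCoset_mul_subgroup]
  · exact hμH.symm.le.trans <| measure_le_measure_inter_smul_inv μ
      (doubleCoset_mul_subgroup g).le (subgroup_mul_doubleCoset g').le hx

/-- For `g, g' ∈ G`, only finitely many double cosets of `H` are contained in `HgHg'H`; if
`C ⊆ HgHg'H` is a finite set containing exactly one representative of each such double coset,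
then `1_{HgH} ⋆ 1_{Hg'H} = Σ_{g''∈C} μ(HgH ∩ g''Hg'⁻¹H)·1_{Hg''H}`; moreover
`μ(HgH ∩ g''Hg'⁻¹H) ≥ 1` for every `g'' ∈ HgHg'H`. -/
theorem doubleCoset_conv_doubleCoset {G : Type} [Group G] [TopologicalSpace G]
    [IsTopologicalGroup G] [LocallyCompactSpace G] [T2Space G]
    [MeasurableSpace G] [BorelSpace G]
    (μ : Measure G) [μ.IsHaarMeasure]
    (H : Subgroup G) (hHo : IsOpen (H : Set G)) (hHc : IsCompact (H : Set G))
    (hμH : μ (H : Set G) = 1) (g g' : G) :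
    -- only finitely many double cosets of `H` are contained in `HgHg'H`
    ((fun x => (H : Set G) * {x} * (H : Set G)) ''
        ((H : Set G) * {g} * (H : Set G) * {g'} * (H : Set G))).Finite ∧
    -- the convolution formula, for any set `C` of representatives of these double cosets
    (∀ C : Finset G,
        (C : Set G) ⊆ (H : Set G) * {g} * (H : Set G) * {g'} * (H : Set G) →
        (∀ x ∈ (H : Set G) * {g} * (H : Set G) * {g'} * (H : Set G),
          ∃! c, c ∈ C ∧ c ∈ (H : Set G) * {x} * (H : Set G)) →
        mconv μ (((H : Set G) * {g} * (H : Set G)).indicator fun _ => (1 : ℝ))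
            (((H : Set G) * {g'} * (H : Set G)).indicator fun _ => (1 : ℝ)) =
          fun x => ∑ c ∈ C,
            (μ (((H : Set G) * {g} * (H : Set G)) ∩
                ({c} * (H : Set G) * {g'⁻¹} * (H : Set G)))).toReal *
              ((H : Set G) * {c} * (H : Set G)).indicator (fun _ => (1 : ℝ)) x) ∧
    -- positivity of the coefficients
    (∀ g'' ∈ (H : Set G) * {g} * (H : Set G) * {g'} * (H : Set G),
        1 ≤ μ (((H : Set G) * {g} * (H : Set G)) ∩
          ({g''} * (H : Set G) * {g'⁻¹} * (H : Set G)))) :=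
  doubleCoset_conv_doubleCoset_general μ H hHo hHc hμH g g'
end

section
/- Assume in addition that G is unimodular (μ is also right invariant). Then for all g, g' ∈ G one has ∫_G (1_{HgH} ⋆ 1_{Hg'H}) dμ = μ(HgH)·μ(Hg'H). Moreover, for g ∈ G the following are equivalent: (a) there exists a compactly supported, left and right H-invariant, integer-valued function f on G with 1_{HgH} ⋆ f = f ⋆ 1_{HgH} = 1_H; (b) μ(HgH) = 1; (c) gHg⁻¹ = H, i.e. g lies in the normalizer of H in G. -/
open MeasureTheory
open scoped Pointwise

open QuotientGroup

section DoubleCoset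

variable {G : Type*} [Group G] {H : Subgroup G}

theorem mul_mem_doubleCoset_iff_left {g h x : G} (hh : h ∈ H) :
    h * x ∈ (H : Set G) * {g} * (H : Set G) ↔ x ∈ (H : Set G) * {g} * (H : Set G) := by
  refine ⟨fun hx => ?_, fun hx => ?_⟩
  · obtain ⟨a, ha, b, hb, hab⟩ := DoubleCoset.mem_doubleCoset.1 hx
    exact DoubleCoset.mem_doubleCoset.2
      ⟨h⁻¹ * a, mul_mem (inv_mem hh) ha, b, hb, by rw [← mul_right_inj h, hab]; group⟩
  · obtain ⟨a, ha, b, hb, rfl⟩ := DoubleCoset.mem_doubleCoset.1 hx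
    exact DoubleCoset.mem_doubleCoset.2 ⟨h * a, mul_mem hh ha, b, hb, by group⟩

theorem mul_mem_doubleCoset_iff_right {g h x : G} (hh : h ∈ H) :
    x * h ∈ (H : Set G) * {g} * (H : Set G) ↔ x ∈ (H : Set G) * {g} * (H : Set G) := by
  refine ⟨fun hx => ?_, fun hx => ?_⟩
  · obtain ⟨a, ha, b, hb, hab⟩ := DoubleCoset.mem_doubleCoset.1 hx
    exact DoubleCoset.mem_doubleCoset.2
      ⟨a, ha, b * h⁻¹, mul_mem hb (inv_mem hh), by rw [← mul_left_inj h, hab]; group⟩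
  · obtain ⟨a, ha, b, hb, rfl⟩ := DoubleCoset.mem_doubleCoset.1 hx
    exact DoubleCoset.mem_doubleCoset.2 ⟨a, ha, b * h, mul_mem hb hh, by group⟩

theorem indicator_doubleCoset_mul_left {M : Type*} [Zero M] (g : G) (c : M) :
    ∀ h ∈ H, ∀ x : G, ((H : Set G) * {g} * (H : Set G)).indicator (fun _ => c) (h * x) =
      ((H : Set G) * {g} * (H : Set G)).indicator (fun _ => c) x := by
  classical
  intro h hh x
  rw [Set.indicator_apply, Set.indicator_apply, mul_mem_doubleCoset_iff_left hh]

theorem indicator_doubleCoset_mul_right {M : Type*} [Zero M] (g : G) (c : M) :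
    ∀ h ∈ H, ∀ x : G, ((H : Set G) * {g} * (H : Set G)).indicator (fun _ => c) (x * h) =
      ((H : Set G) * {g} * (H : Set G)).indicator (fun _ => c) x := by
  classical
  intro h hh x
  rw [Set.indicator_apply, Set.indicator_apply, mul_mem_doubleCoset_iff_right hh]

theorem smul_subset_doubleCoset (g : G) :
    g • (H : Set G) ⊆ (H : Set G) * {g} * (H : Set G) := by
  rintro _ ⟨h, hh, rfl⟩
  exact DoubleCoset.mem_doubleCoset.2 ⟨1, H.one_mem, h, hh, by simp⟩

theorem doubleCoset_eq_smul_of_mem_normalizer {g : G}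
    (hg : g ∈ Subgroup.normalizer (H : Set G)) :
    (H : Set G) * {g} * (H : Set G) = g • (H : Set G) := by
  refine (Set.Subset.antisymm (fun x hx => ?_) (smul_subset_doubleCoset g))
  obtain ⟨a, ha, b, hb, rfl⟩ := DoubleCoset.mem_doubleCoset.1 hx
  exact ⟨g⁻¹ * a * g * b, mul_mem ((Subgroup.mem_normalizer_iff''.1 hg a).1 ha) hb, by
    simp only [smul_eq_mul]; group⟩

end DoubleCoset

section LeftCosets

variable {G : Type*} [Group G] {H : Subgroup G}

theorem mem_smul_out_iff {q : G ⧸ H} {x : G} :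
    x ∈ q.out • (H : Set G) ↔ (x : G ⧸ H) = q := by
  rw [← eq_class_eq_leftCoset, out_eq']
  rfl

theorem eq_sum_indicator_smul_out {M : Type*} [AddCommMonoid M] {f : G → M}
    (hf : ∀ h ∈ H, ∀ x : G, f (x * h) = f x)
    {T : Finset (G ⧸ H)} (hT : Function.support f ⊆ (↑) ⁻¹' (T : Set (G ⧸ H))) :
    f = ∑ q ∈ T, (q.out • (H : Set G)).indicator fun _ => f q.out := by
  classical
  funext x
  simp only [Finset.sum_apply, Set.indicator_apply, mem_smul_out_iff, Finset.sum_ite_eq]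
  split_ifs with hx
  · obtain ⟨h, hh⟩ := mk_out_eq_mul H x
    rw [hh, hf h h.2]
  · exact Function.notMem_support.1 fun hfx => hx (hT hfx)

theorem indicator_smul_coset_mul_eq {φ : G → ℝ}
    (hφ : ∀ h ∈ H, ∀ x : G, φ (h * x) = φ x)
    (a x y : G) (c : ℝ) :
    (a • (H : Set G)).indicator (fun _ => c) y * φ (y⁻¹ * x) =
      (a • (H : Set G)).indicator (fun _ => c * φ (a⁻¹ * x)) y := by
  by_cases hy : y ∈ a • (H : Set G)
  · obtain ⟨h, hh, rfl⟩ := hy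
    rw [Set.indicator_of_mem (Set.smul_mem_smul_set hh),
      Set.indicator_of_mem (Set.smul_mem_smul_set hh)]
    simp only [smul_eq_mul, mul_inv_rev, mul_assoc, hφ _ (inv_mem hh)]
  · simp only [Set.indicator_of_notMem hy, zero_mul]

end LeftCosets

section Topology

variable {G : Type*} [Group G] [TopologicalSpace G] [IsTopologicalGroup G] {H : Subgroup G}

theorem exists_finset_support_subset_of_hasCompactSupport (hHo : IsOpen (H : Set G))
    {M : Type*} [Zero M] {f : G → M} (hf : HasCompactSupport f) :
    ∃ T : Finset (G ⧸ H), Function.support f ⊆ (↑) ⁻¹' (T : Set (G ⧸ H)) := by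
  have := QuotientGroup.discreteTopology hHo
  have hfin := (hf.image (continuous_mk (N := H))).finite_of_discrete
  exact ⟨hfin.toFinset, fun x hx => by
    simpa using Set.mem_image_of_mem mk (subset_tsupport f hx)⟩

theorem isCompact_doubleCoset (hHc : IsCompact (H : Set G)) (g : G) :
    IsCompact ((H : Set G) * {g} * (H : Set G)) :=
  (hHc.mul isCompact_singleton).mul hHc

theorem hasCompactSupport_indicator_doubleCoset (hHo : IsOpen (H : Set G))
    (hHc : IsCompact (H : Set G)) (g : G) :
    HasCompactSupport (((H : Set G) * {g} * (H : Set G)).indicator fun _ => (1 : ℝ)) :=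
  HasCompactSupport.intro' (isCompact_doubleCoset hHc g)
    ((H.isClosed_of_isOpen hHo).mul_left_of_isCompact (hHc.mul isCompact_singleton))
    fun _ hx => Set.indicator_of_notMem hx _

end Topology

section Haar

variable {G : Type} [Group G] [MeasurableSpace G] [MeasurableMul G] {μ : Measure G}
  [μ.IsMulLeftInvariant] {H : Subgroup G}

theorem integral_indicator_smul_coset (hHm : MeasurableSet (H : Set G)) (hμH : μ H = 1)
    (a : G) (c : ℝ) : ∫ x, (a • (H : Set G)).indicator (fun _ => c) x ∂μ = c := by
  rw [integral_indicator_const _ (hHm.const_smul a), measureReal_def, measure_smul, hμH]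
  simp

theorem integrable_indicator_smul_coset (hHm : MeasurableSet (H : Set G)) (hμH : μ H = 1)
    (a : G) (c : ℝ) : Integrable ((a • (H : Set G)).indicator fun _ => c) μ :=
  (integrableOn_const (by simp [measure_smul, hμH])).integrable_indicator (hHm.const_smul a)

theorem integral_eq_sum_of_support_subset (hHm : MeasurableSet (H : Set G)) (hμH : μ H = 1)
    {f : G → ℝ} (hf : ∀ h ∈ H, ∀ x : G, f (x * h) = f x)
    {T : Finset (G ⧸ H)} (hT : Function.support f ⊆ (↑) ⁻¹' (T : Set (G ⧸ H))) :
    ∫ x, f x ∂μ = ∑ q ∈ T, f q.out := by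
  conv_lhs => rw [eq_sum_indicator_smul_out hf hT]
  simp only [Finset.sum_apply]
  rw [integral_finsetSum _ fun q _ => integrable_indicator_smul_coset hHm hμH _ _]
  simp only [integral_indicator_smul_coset hHm hμH]

theorem mconv_indicator_smul_coset (hHm : MeasurableSet (H : Set G)) (hμH : μ H = 1)
    {φ : G → ℝ} (hφ : ∀ h ∈ H, ∀ x : G, φ (h * x) = φ x) (a : G) (c : ℝ) (x : G) :
    mconv μ ((a • (H : Set G)).indicator fun _ => c) φ x = c * φ (a⁻¹ * x) := by
  simp only [mconv, indicator_smul_coset_mul_eq hφ, integral_indicator_smul_coset hHm hμH]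

theorem mconv_eq_sum_of_support_subset (hHm : MeasurableSet (H : Set G)) (hμH : μ H = 1)
    {f : G → ℝ} (hf : ∀ h ∈ H, ∀ x : G, f (x * h) = f x)
    {T : Finset (G ⧸ H)} (hT : Function.support f ⊆ (↑) ⁻¹' (T : Set (G ⧸ H)))
    {φ : G → ℝ} (hφ : ∀ h ∈ H, ∀ x : G, φ (h * x) = φ x) (x : G) :
    mconv μ f φ x = ∑ q ∈ T, f q.out * φ (q.out⁻¹ * x) := by
  conv_lhs => rw [eq_sum_indicator_smul_out hf hT]
  simp only [mconv, Finset.sum_apply, Finset.sum_mul, indicator_smul_coset_mul_eq hφ]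
  rw [integral_finsetSum _ fun q _ => integrable_indicator_smul_coset hHm hμH _ _]
  simp only [integral_indicator_smul_coset hHm hμH]

theorem integral_mconv_of_support_subset (hHm : MeasurableSet (H : Set G)) (hμH : μ H = 1)
    {f : G → ℝ} (hf : ∀ h ∈ H, ∀ x : G, f (x * h) = f x)
    {T : Finset (G ⧸ H)} (hT : Function.support f ⊆ (↑) ⁻¹' (T : Set (G ⧸ H)))
    {φ : G → ℝ} (hφ : ∀ h ∈ H, ∀ x : G, φ (h * x) = φ x) (hφi : Integrable φ μ) :
    ∫ x, mconv μ f φ x ∂μ = (∫ x, f x ∂μ) * ∫ x, φ x ∂μ := by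
  simp only [mconv_eq_sum_of_support_subset hHm hμH hf hT hφ]
  rw [integral_finsetSum _ fun q _ => (hφi.comp_mul_left _).const_mul _,
    integral_eq_sum_of_support_subset hHm hμH hf hT, Finset.sum_mul]
  simp only [integral_const_mul, integral_mul_left_eq_self]

theorem exists_int_integral_eq (hHm : MeasurableSet (H : Set G)) (hμH : μ H = 1)
    {f : G → ℝ} (hf : ∀ h ∈ H, ∀ x : G, f (x * h) = f x)
    {T : Finset (G ⧸ H)} (hT : Function.support f ⊆ (↑) ⁻¹' (T : Set (G ⧸ H)))
    (hfz : ∀ x : G, ∃ n : ℤ, f x = n) : ∃ n : ℤ, ∫ x, f x ∂μ = n := by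
  choose F hF using hfz
  exact ⟨∑ q ∈ T, F q.out, by
    rw [integral_eq_sum_of_support_subset hHm hμH hf hT]; push_cast; simp only [hF]⟩

end Haar

theorem IsOpen.subset_of_measure_le {X : Type*} [TopologicalSpace X] [MeasurableSpace X]
    [OpensMeasurableSpace X] (μ : Measure X) [μ.IsOpenPosMeasure] {U F : Set X} (hU : IsOpen U)
    (hF : IsClosed F) (hFU : F ⊆ U) (hμ : μ U ≤ μ F) (hμF : μ F ≠ ⊤) : U ⊆ F := by
  have hμdiff : μ (U \ F) = 0 := by
    rw [measure_sdiff hFU hF.measurableSet.nullMeasurableSet hμF, tsub_eq_zero_of_le hμ]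
  exact Set.sdiff_eq_empty.1 (((hU.sdiff hF).measure_eq_zero_iff μ).1 hμdiff)

section Unimodular

variable {G : Type} [Group G] [TopologicalSpace G] [IsTopologicalGroup G] [MeasurableSpace G]
  [BorelSpace G] {H : Subgroup G}

theorem integrable_indicator_doubleCoset {μ : Measure G} [IsFiniteMeasureOnCompacts μ]
    (hHo : IsOpen (H : Set G)) (hHc : IsCompact (H : Set G)) (g : G) :
    Integrable (((H : Set G) * {g} * (H : Set G)).indicator fun _ => (1 : ℝ)) μ :=
  (integrableOn_const (isCompact_doubleCoset hHc g).measure_lt_top.ne).integrable_indicator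
    hHo.mul_left.measurableSet

variable {μ : Measure G} [μ.IsMulLeftInvariant]

theorem measure_doubleCoset_eq_one_iff [μ.IsMulRightInvariant] [μ.IsOpenPosMeasure]
    (hHo : IsOpen (H : Set G)) (hμH : μ H = 1) (g : G) :
    μ ((H : Set G) * {g} * (H : Set G)) = 1 ↔ g ∈ Subgroup.normalizer (H : Set G) := by
  refine ⟨fun hA => ?_, fun hg => by
    rw [doubleCoset_eq_smul_of_mem_normalizer hg, measure_smul, hμH]⟩
  have hHcl : IsClosed (H : Set G) := H.isClosed_of_isOpen hHo
  have hU : IsOpen ((H : Set G) * {g} * (H : Set G)) := hHo.mul_left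
  have hHg : (H : Set G) * {g} = (· * g⁻¹) ⁻¹' H := by
    rw [Set.mul_singleton, Set.image_mul_right]
  have h_sub_left : (H : Set G) * {g} * (H : Set G) ⊆ g • (H : Set G) :=
    hU.subset_of_measure_le μ (hHcl.smul g) (smul_subset_doubleCoset g)
      (by rw [hA, measure_smul, hμH]) (by rw [measure_smul, hμH]; exact ENNReal.one_ne_top)
  have h_sub_right : (H : Set G) * {g} * (H : Set G) ⊆ (· * g⁻¹) ⁻¹' H := by
    rw [← hHg]
    refine hU.subset_of_measure_le μ ?_ (Set.subset_mul_left _ H.one_mem) ?_ ?_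
    · rw [hHg]; exact hHcl.preimage (continuous_mul_const g⁻¹)
    · rw [hA, hHg, measure_preimage_mul_right, hμH]
    · rw [hHg, measure_preimage_mul_right, hμH]; exact ENNReal.one_ne_top
  refine Subgroup.mem_normalizer_iff.2 fun h => ⟨fun hh => ?_, fun hh => ?_⟩
  · exact h_sub_right (smul_subset_doubleCoset g (Set.smul_mem_smul_set hh))
  · have hmem := h_sub_left (DoubleCoset.mem_doubleCoset.2 ⟨_, hh, 1, H.one_mem, rfl⟩)
    rw [mem_leftCoset_iff] at hmem
    simpa [mul_assoc] using hmem

theorem measure_doubleCoset_eq_one_of_mconv_eq_indicator [IsFiniteMeasureOnCompacts μ]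
    (hHo : IsOpen (H : Set G)) (hHc : IsCompact (H : Set G)) (hμH : μ H = 1) {g : G}
    {f : G → ℝ} (hfc : HasCompactSupport f) (hf : ∀ h ∈ H, ∀ x : G, f (x * h) = f x)
    (hfz : ∀ x : G, ∃ n : ℤ, f x = n)
    (hconv : mconv μ f (((H : Set G) * {g} * (H : Set G)).indicator fun _ => (1 : ℝ)) =
      (H : Set G).indicator fun _ => (1 : ℝ)) :
    μ ((H : Set G) * {g} * (H : Set G)) = 1 := by
  set A := (H : Set G) * {g} * (H : Set G)
  have hAm : MeasurableSet A := hHo.mul_left.measurableSet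
  have hAfin : μ A ≠ ⊤ := (isCompact_doubleCoset hHc g).measure_lt_top.ne
  obtain ⟨T, hT⟩ := exists_finset_support_subset_of_hasCompactSupport hHo hfc
  obtain ⟨n, hn⟩ := exists_int_integral_eq hHo.measurableSet hμH hf hT hfz
  have hnA : (n : ℝ) * μ.real A = 1 := by
    have hint := congrArg (fun φ => ∫ x, φ x ∂μ) hconv
    simp only at hint
    rwa [integral_mconv_of_support_subset hHo.measurableSet hμH hf hT
      (indicator_doubleCoset_mul_left g 1) (integrable_indicator_doubleCoset hHo hHc g),
      hn, integral_indicator_const _ hAm, integral_indicator_const _ hHo.measurableSet,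
      measureReal_def μ H, hμH, smul_eq_mul, smul_eq_mul, mul_one, ENNReal.toReal_one,
      mul_one] at hint
  have hA1 : 1 ≤ μ.real A := by
    have hgH := measure_mono (μ := μ) (smul_subset_doubleCoset (H := H) g)
    rw [measure_smul, hμH] at hgH
    simpa [measureReal_def] using ENNReal.toReal_mono hAfin hgH
  have hn1 : (1 : ℝ) ≤ n := by
    have hn0 : (0 : ℝ) < n := by nlinarith
    exact_mod_cast (show (0 : ℤ) < n by exact_mod_cast hn0)
  rw [← ENNReal.toReal_eq_one_iff, ← measureReal_def]
  nlinarith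

theorem exists_mconv_inverse_of_mem_normalizer (hHo : IsOpen (H : Set G))
    (hHc : IsCompact (H : Set G)) (hμH : μ H = 1) {g : G}
    (hg : g ∈ Subgroup.normalizer (H : Set G)) :
    ∃ f : G → ℝ, HasCompactSupport f ∧
      (∀ h ∈ H, ∀ x : G, f (h * x) = f x) ∧
      (∀ h ∈ H, ∀ x : G, f (x * h) = f x) ∧
      (∀ x : G, ∃ n : ℤ, f x = (n : ℝ)) ∧
      mconv μ (((H : Set G) * {g} * (H : Set G)).indicator fun _ => (1 : ℝ)) f =
        (H : Set G).indicator (fun _ => (1 : ℝ)) ∧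
      mconv μ f (((H : Set G) * {g} * (H : Set G)).indicator fun _ => (1 : ℝ)) =
        (H : Set G).indicator (fun _ => (1 : ℝ)) := by
  classical
  have hHm : MeasurableSet (H : Set G) := hHo.measurableSet
  have hA := doubleCoset_eq_smul_of_mem_normalizer hg
  have hA' := doubleCoset_eq_smul_of_mem_normalizer (inv_mem hg)
  refine ⟨((H : Set G) * {g⁻¹} * (H : Set G)).indicator fun _ => (1 : ℝ),
    hasCompactSupport_indicator_doubleCoset hHo hHc g⁻¹, indicator_doubleCoset_mul_left g⁻¹ 1,
    indicator_doubleCoset_mul_right g⁻¹ 1,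
    fun x => ⟨((H : Set G) * {g⁻¹} * (H : Set G)).indicator (fun _ => 1) x, by
      rw [Set.indicator_apply, Set.indicator_apply]; push_cast; rfl⟩, ?_, ?_⟩
  · ext x
    rw [hA, mconv_indicator_smul_coset hHm hμH (indicator_doubleCoset_mul_left g⁻¹ 1), hA',
      one_mul, ← smul_eq_mul]
    simp only [Set.indicator_apply, Set.smul_mem_smul_set_iff]
  · ext x
    rw [hA', mconv_indicator_smul_coset hHm hμH (indicator_doubleCoset_mul_left g 1), hA,
      one_mul, inv_inv, ← smul_eq_mul]
    simp only [Set.indicator_apply, Set.smul_mem_smul_set_iff]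

end Unimodular

theorem integral_conv_and_unit_iff_general {G : Type} [Group G] [TopologicalSpace G]
    [IsTopologicalGroup G]
    [MeasurableSpace G] [BorelSpace G]
    (μ : Measure G) [μ.IsHaarMeasure] [μ.IsMulRightInvariant]
    (H : Subgroup G) (hHo : IsOpen (H : Set G)) (hHc : IsCompact (H : Set G))
    (hμH : μ (H : Set G) = 1) :
    (∀ g g' : G,
        ∫ x, mconv μ (((H : Set G) * {g} * (H : Set G)).indicator fun _ => (1 : ℝ))
            (((H : Set G) * {g'} * (H : Set G)).indicator fun _ => (1 : ℝ)) x ∂μ =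
          (μ ((H : Set G) * {g} * (H : Set G))).toReal *
            (μ ((H : Set G) * {g'} * (H : Set G))).toReal) ∧
    (∀ g : G,
      ((∃ f : G → ℝ, HasCompactSupport f ∧
          (∀ h ∈ H, ∀ x : G, f (h * x) = f x) ∧
          (∀ h ∈ H, ∀ x : G, f (x * h) = f x) ∧
          (∀ x : G, ∃ n : ℤ, f x = (n : ℝ)) ∧
          mconv μ (((H : Set G) * {g} * (H : Set G)).indicator fun _ => (1 : ℝ)) f =
            (H : Set G).indicator (fun _ => (1 : ℝ)) ∧
          mconv μ f (((H : Set G) * {g} * (H : Set G)).indicator fun _ => (1 : ℝ)) =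
            (H : Set G).indicator (fun _ => (1 : ℝ))) ↔
        μ ((H : Set G) * {g} * (H : Set G)) = 1) ∧
      (μ ((H : Set G) * {g} * (H : Set G)) = 1 ↔
        (fun x => g * x * g⁻¹) '' (H : Set G) = (H : Set G))) := by
  have hmeas (g : G) : MeasurableSet ((H : Set G) * {g} * (H : Set G)) :=
    hHo.mul_left.measurableSet
  refine ⟨fun g g' => ?_, fun g => ⟨⟨?_, fun hg => ?_⟩, ?_⟩⟩
  · obtain ⟨T, hT⟩ := exists_finset_support_subset_of_hasCompactSupport hHo
      (hasCompactSupport_indicator_doubleCoset hHo hHc g)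
    rw [integral_mconv_of_support_subset hHo.measurableSet hμH
      (indicator_doubleCoset_mul_right g 1) hT (indicator_doubleCoset_mul_left g' 1)
      (integrable_indicator_doubleCoset hHo hHc g'),
      integral_indicator_const _ (hmeas g), integral_indicator_const _ (hmeas g')]
    simp [measureReal_def]
  · rintro ⟨f, hfc, -, hf, hfz, -, hconv⟩
    exact measure_doubleCoset_eq_one_of_mconv_eq_indicator hHo hHc hμH hfc hf hfz hconv
  · exact exists_mconv_inverse_of_mem_normalizer hHo hHc hμH
      ((measure_doubleCoset_eq_one_iff hHo hμH g).1 hg)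
  · rw [measure_doubleCoset_eq_one_iff hHo hμH, Subgroup.mem_normalizer_iff_conj_image_eq]
    rfl

/-- Assume `G` is unimodular. Then `∫_G (1_{HgH} ⋆ 1_{Hg'H}) dμ = μ(HgH)·μ(Hg'H)` for all
`g, g' ∈ G`; moreover for `g ∈ G` the following are equivalent: (a) `1_{HgH}` has a two-sided
convolution inverse that is a compactly supported, left and right `H`-invariant,
integer-valued function; (b) `μ(HgH) = 1`; (c) `gHg⁻¹ = H`. -/
theorem integral_conv_and_unit_iff {G : Type} [Group G] [TopologicalSpace G]
    [IsTopologicalGroup G] [LocallyCompactSpace G] [T2Space G]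
    [MeasurableSpace G] [BorelSpace G]
    (μ : Measure G) [μ.IsHaarMeasure] [μ.IsMulRightInvariant]
    (H : Subgroup G) (hHo : IsOpen (H : Set G)) (hHc : IsCompact (H : Set G))
    (hμH : μ (H : Set G) = 1) :
    (∀ g g' : G,
        ∫ x, mconv μ (((H : Set G) * {g} * (H : Set G)).indicator fun _ => (1 : ℝ))
            (((H : Set G) * {g'} * (H : Set G)).indicator fun _ => (1 : ℝ)) x ∂μ =
          (μ ((H : Set G) * {g} * (H : Set G))).toReal *
            (μ ((H : Set G) * {g'} * (H : Set G))).toReal) ∧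
    (∀ g : G,
      ((∃ f : G → ℝ, HasCompactSupport f ∧
          (∀ h ∈ H, ∀ x : G, f (h * x) = f x) ∧
          (∀ h ∈ H, ∀ x : G, f (x * h) = f x) ∧
          (∀ x : G, ∃ n : ℤ, f x = (n : ℝ)) ∧
          mconv μ (((H : Set G) * {g} * (H : Set G)).indicator fun _ => (1 : ℝ)) f =
            (H : Set G).indicator (fun _ => (1 : ℝ)) ∧
          mconv μ f (((H : Set G) * {g} * (H : Set G)).indicator fun _ => (1 : ℝ)) =
            (H : Set G).indicator (fun _ => (1 : ℝ))) ↔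
        μ ((H : Set G) * {g} * (H : Set G)) = 1) ∧
      (μ ((H : Set G) * {g} * (H : Set G)) = 1 ↔
        (fun x => g * x * g⁻¹) '' (H : Set G) = (H : Set G))) :=
  integral_conv_and_unit_iff_general μ H hHo hHc hμH
end

section
/- Every F-linear endomorphism φ of L can be written uniquely in the form φ(x) = Σ_{g∈G} a_g·g(x) with coefficients a_g ∈ L; equivalently, the F-linear maps x ↦ g(x), for g ∈ G, form a basis of End_F(L) as a left L-vector space, where L acts on End_F(L) by postcomposition with multiplication. -/
/-!
By Dedekind's lemma the maps `x ↦ g • x` are `L`-linearly independent in `End_F(L)`, and by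
Artin's theorem `[L : F] = |G|`, so `End_F(L)` has `L`-dimension `[L : F] = |G|`. Hence these
`|G|` maps form an `L`-basis, and the coefficients `a_g` are the coordinates of `φ` in it.
-/

theorem Module.Basis.existsUnique_eq_sum_smul {ι R M : Type*} [Fintype ι] [Semiring R]
    [AddCommMonoid M] [Module R M] (b : Module.Basis ι R M) (v : M) :
    ∃! c : ι → R, v = ∑ i, c i • b i := by
  simp_rw [← b.equivFun_symm_apply, LinearEquiv.eq_symm_apply]
  exact existsUnique_eq'

namespace FixedPoints

variable (G L : Type*) [Group G] [Field L] [MulSemiringAction G L] [FaithfulSMul G L]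

theorem linearIndependent_toAlgHom_toLinearMap :
    LinearIndependent L fun g : G ↦ (MulSemiringAction.toAlgHom (subfield G L) L g).toLinearMap :=
  (linearIndependent_toLinearMap _ L L).comp _ (MulSemiringAction.toAlgHom_injective _ L)

variable [Fintype G]

theorem card_eq_finrank_linearMap :
    Fintype.card G = Module.finrank L (L →ₗ[subfield G L] L) := by
  rw [Module.finrank_linearMap_self, finrank_eq_card]

noncomputable def smulBasis : Module.Basis G L (L →ₗ[subfield G L] L) :=
  basisOfLinearIndependentOfCardEqFinrank' _ (linearIndependent_toAlgHom_toLinearMap G L)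
    (card_eq_finrank_linearMap G L)

@[simp]
theorem smulBasis_apply (g : G) (x : L) : smulBasis G L g x = g • x := by
  simp [smulBasis]

end FixedPoints

/-- **Dedekind's lemma / linear independence of automorphisms**: let `L` be a field with a
faithful action of a finite group `G` by field automorphisms, and let `F = L^G` be the fixed
field.  Every `F`-linear endomorphism `φ` of `L` can be written uniquely as
`φ(x) = Σ_{g ∈ G} a_g · g(x)` with coefficients `a_g ∈ L`; i.e. the maps `x ↦ g(x)` form a
basis of `End_F(L)` as a left `L`-vector space. -/
theorem linearMap_eq_sum_smul_automorphisms_unique {L : Type} [Field L]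
    {G : Type} [Group G] [Fintype G] [MulSemiringAction G L] [FaithfulSMul G L]
    (φ : L →ₗ[FixedPoints.subfield G L] L) :
    ∃! a : G → L, ∀ x : L, φ x = ∑ g : G, a g * (g • x) := by
  have coeffs_iff (a : G → L) : (∀ x : L, φ x = ∑ g : G, a g * (g • x)) ↔
      φ = ∑ g : G, a g • FixedPoints.smulBasis G L g := by
    simp [LinearMap.ext_iff]
  simpa only [coeffs_iff] using (FixedPoints.smulBasis G L).existsUnique_eq_sum_smul φ
end

section
/- There exist a natural number n and elements x₁,…,xₙ, y₁,…,yₙ ∈ L such that for every g ∈ G one has Σ_{i=1}^n xᵢ·g(yᵢ) = 1 if g = 1 and Σ_{i=1}^n xᵢ·g(yᵢ) = 0 if g ≠ 1; that is, L is a G-Galois extension of the fixed field F = L^G in the sense of Galois extensions of commutative rings. -/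
/-!
Each `y ∈ L` gives a vector `(g • y)_g` in the `L`-vector space `G → L`. A linear form
`(a_g) ↦ ∑ c_g a_g` vanishing on all of them is a linear relation `∑ c_g (g • ·) = 0` among the
distinct automorphisms of `L`, so `c = 0` by Dedekind's independence of characters. Hence these
vectors span `G → L`; writing the indicator of `1` as a finite combination `∑ xᵢ (g • yᵢ)_g` gives
the Galois system.
-/

open Module Submodule

theorem MulSemiringAction.linearIndependent_smul (G L : Type*) [Monoid G] [CommRing L]
    [IsDomain L] [MulSemiringAction G L] [FaithfulSMul G L] :
    LinearIndependent L (fun (g : G) (y : L) => g • y) :=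
  (linearIndependent_monoidHom L L).comp (fun g => (MulSemiringAction.toRingHom G L g).toMonoidHom)
    fun _ _ h => eq_of_smul_eq_smul (DFunLike.congr_fun h)

theorem MulSemiringAction.span_range_smul_eq_top (G L : Type*) [Monoid G] [Fintype G] [Field L]
    [MulSemiringAction G L] [FaithfulSMul G L] :
    span L (Set.range fun (y : L) (g : G) => g • y) = ⊤ := by
  classical
  rw [← dualAnnihilator_eq_bot_iff, eq_bot_iff]
  intro f hf
  rw [mem_dualAnnihilator] at hf
  set c : G → L := fun g => f fun h => if g = h then 1 else 0
  have hf_apply (x : G → L) : f x = ∑ g, x g * c g := LinearMap.pi_apply_eq_sum_univ f x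
  have hc : c = 0 := by
    refine funext <| Fintype.linearIndependent_iff.mp (linearIndependent_smul G L) c <|
      funext fun y => ?_
    simpa [hf_apply, mul_comm] using hf _ (subset_span ⟨y, rfl⟩)
  ext x
  simp [hf_apply, hc]

theorem Submodule.exists_fin_sum_eq_of_mem_span_range {R M ι : Type*} [Semiring R]
    [AddCommMonoid M] [Module R M] {v : ι → M} {x : M} (hx : x ∈ span R (Set.range v)) :
    ∃ (n : ℕ) (c : Fin n → R) (y : Fin n → ι), ∑ i, c i • v (y i) = x := by
  obtain ⟨n, c, w, rfl⟩ := mem_span_set'.mp hx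
  choose y hy using fun i => (w i).2
  exact ⟨n, c, y, by simp only [hy]⟩

/-- Let `L` be a field with a faithful action of a finite group `G` by field automorphisms.
Then there exist `n` and elements `x₁,…,xₙ, y₁,…,yₙ ∈ L` such that for every `g ∈ G`,
`Σᵢ xᵢ·g(yᵢ) = 1` if `g = 1` and `= 0` otherwise; that is, `L` is a `G`-Galois extension of
the fixed field `F = L^G` in the sense of Galois extensions of commutative rings
(existence of a `G`-Galois system). -/
theorem exists_galois_system {L : Type} [Field L]
    {G : Type} [Group G] [Fintype G] [DecidableEq G]
    [MulSemiringAction G L] [FaithfulSMul G L] :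
    ∃ (n : ℕ) (x y : Fin n → L), ∀ g : G,
      ∑ i : Fin n, x i * (g • y i) = if g = 1 then 1 else 0 := by
  have hδ : (fun g : G => if g = 1 then (1 : L) else 0) ∈
      span L (Set.range fun (y : L) (g : G) => g • y) := by
    simp [MulSemiringAction.span_range_smul_eq_top]
  obtain ⟨n, x, y, hxy⟩ := exists_fin_sum_eq_of_mem_span_range hδ
  exact ⟨n, x, y, fun g => by simpa using congr_fun hxy g⟩
end
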